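/- Let h ∈ ℂ[X,Y] with ∂h/∂Y ≠ 0, and let S be a segment of the right Newton polygon of h that does not touch the horizontal axis (i.e. every point of S has ordinate ≥ 1). Then T = S − (0,1) is a segment of the right Newton polygon of ∂h/∂Y, and in(∂h/∂Y, T) = ∂/∂Y in(h, S). -/

import Mathlib

open scoped Classical

noncomputable section

/-- A (candidate) segment in the plane, given by its two lattice endpoints. -/
structure Seg where
  P : ℕ × ℕ
  Q : ℕ × ℕ

/-- the support of a polynomial in two variables, as a finite set of pairs `(α,β)`. -/
def supp (h : MvPolynomial (Fin 2) ℂ) : Finset (ℕ × ℕ) :=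
  h.support.image fun d => (d 0, d 1)

/-- the coefficient `h_{αβ}` of `X^α Y^β` in `h`. -/
def coeff2 (h : MvPolynomial (Fin 2) ℂ) (p : ℕ × ℕ) : ℂ :=
  MvPolynomial.coeff (Finsupp.single 0 p.1 + Finsupp.single 1 p.2) h

/-- the linear functional whose level lines are parallel to `S`, normalized so that
(for a right-polygon segment, `S.P.2 < S.Q.2`) its gradient points to the right. -/
def lfun (S : Seg) (v : ℕ × ℕ) : ℤ :=
  ((S.Q.2 : ℤ) - S.P.2) * v.1 - ((S.Q.1 : ℤ) - S.P.1) * v.2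

/-- the linear functional whose level lines are parallel to `S`, normalized so that
(for a top-polygon segment, `S.P.1 < S.Q.1`) its gradient points upwards. -/
def gfun (S : Seg) (v : ℕ × ℕ) : ℤ :=
  ((S.Q.1 : ℤ) - S.P.1) * v.2 - ((S.Q.2 : ℤ) - S.P.2) * v.1

/-- `v` lies on the segment with endpoints `S.P` and `S.Q`
(collinear and inside the bounding box). -/
def OnSeg (S : Seg) (v : ℕ × ℕ) : Prop :=
  lfun S v = lfun S S.P ∧
  min S.P.1 S.Q.1 ≤ v.1 ∧ v.1 ≤ max S.P.1 S.Q.1 ∧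
  min S.P.2 S.Q.2 ≤ v.2 ∧ v.2 ≤ max S.P.2 S.Q.2

/-- `S` is a segment (one-dimensional boundary face) of the right Newton polygon of `h`:
its endpoints (ordered by increasing ordinate) are in the support, the whole support lies
weakly to the left of the line through `S` (the supporting line has outward normal with
positive first coordinate), and `S` is a maximal face: every support point on this line has
ordinate between those of the endpoints. Such segments are exactly the boundary faces on
the right of the Newton diagram joining the lines `β = ord_Y h` and `β = deg_Y h`. -/
def RightSeg (h : MvPolynomial (Fin 2) ℂ) (S : Seg) : Prop :=
  S.P ∈ supp h ∧ S.Q ∈ supp h ∧ S.P.2 < S.Q.2 ∧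
  (∀ v ∈ supp h, lfun S v ≤ lfun S S.P) ∧
  (∀ v ∈ supp h, lfun S v = lfun S S.P → S.P.2 ≤ v.2 ∧ v.2 ≤ S.Q.2)

/-- `S` is a segment of the top Newton polygon of `h` (endpoints ordered by increasing
abscissa; the supporting line has outward normal with positive second coordinate). -/
def TopSeg (h : MvPolynomial (Fin 2) ℂ) (S : Seg) : Prop :=
  S.P ∈ supp h ∧ S.Q ∈ supp h ∧ S.P.1 < S.Q.1 ∧
  (∀ v ∈ supp h, gfun S v ≤ gfun S S.P) ∧
  (∀ v ∈ supp h, gfun S v = gfun S S.P → S.P.1 ≤ v.1 ∧ v.1 ≤ S.Q.1)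

/-- `σ(S)` for a right-polygon segment (endpoints ordered by increasing ordinate):
`0` if `S` is vertical, otherwise minus the sign of the slope of `S`. -/
def sigmaR (S : Seg) : ℤ :=
  if S.P.1 = S.Q.1 then 0 else if S.P.1 < S.Q.1 then -1 else 1

/-- `σ(S)` for a top-polygon segment (endpoints ordered by increasing abscissa). -/
def sigmaT (S : Seg) : ℤ :=
  if S.P.2 = S.Q.2 then 0 else if S.P.2 < S.Q.2 then -1 else 1

/-- `|S₁|`, the length of the projection of `S` on the horizontal axis. -/
def len1 (S : Seg) : ℚ := |(S.Q.1 : ℚ) - S.P.1|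

/-- `|S₂|`, the length of the projection of `S` on the vertical axis. -/
def len2 (S : Seg) : ℚ := |(S.Q.2 : ℚ) - S.P.2|

/-- the declivity `(|S₁|/|S₂|)·σ(S)` of a right-polygon segment. -/
def decl (S : Seg) : ℚ := len1 S / len2 S * (sigmaR S : ℚ)

/-- the declivity `(|S₂|/|S₁|)·σ(S)` of a top-polygon segment. -/
def tdecl (S : Seg) : ℚ := len2 S / len1 S * (sigmaT S : ℚ)

/-- `α(S)`: the abscissa of the intersection of the line through `S` with the
horizontal axis. -/
def alphaS (S : Seg) : ℚ := (S.P.1 : ℚ) + (S.P.2 : ℚ) * decl S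

/-- `β(S)`: the ordinate of the intersection of the line through `S` with the
vertical axis. -/
def betaS (S : Seg) : ℚ := (S.P.2 : ℚ) + (S.P.1 : ℚ) * tdecl S

/-- a right-polygon segment is exceptional if it joins the horizontal axis with a
point of the form `(p, 1)`. -/
def RExcep (S : Seg) : Prop := S.P.2 = 0 ∧ S.Q.2 = 1

/-- a top-polygon segment is exceptional if it joins the vertical axis with a
point of the form `(1, q)`. -/
def TExcep (S : Seg) : Prop := S.P.1 = 0 ∧ S.Q.1 = 1

/-- `in(h,S)`: the sum of the monomials of `h` supported on the segment `S`. -/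
def inPoly (h : MvPolynomial (Fin 2) ℂ) (S : Seg) : MvPolynomial (Fin 2) ℂ :=
  ∑ p ∈ (supp h).filter (OnSeg S),
    MvPolynomial.monomial (Finsupp.single 0 p.1 + Finsupp.single 1 p.2) (coeff2 h p)

/-! Differentiating in `Y` sends the coefficient `h_{α,β+1}` to `(β + 1) h_{α,β+1}` at `(α, β)`,
and `β + 1 ≠ 0` in characteristic zero; so `supp (∂h/∂Y)` is `supp h ∖ {β = 0}` translated by
`(0,-1)`. The functional `lfun S` only depends on the direction of `S`, so under this translation
every condition defining a right segment and every monomial of `in(h, S)` is carried over to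
`S − (0,1)`, as long as `S` stays above the horizontal axis. -/

def expVec (p : ℕ × ℕ) : Fin 2 →₀ ℕ := Finsupp.single 0 p.1 + Finsupp.single 1 p.2

lemma coeff2_eq_coeff (h : MvPolynomial (Fin 2) ℂ) (p : ℕ × ℕ) :
    coeff2 h p = MvPolynomial.coeff (expVec p) h := rfl

@[simp]
lemma expVec_apply_zero (p : ℕ × ℕ) : expVec p 0 = p.1 := by
  simp [expVec]

@[simp]
lemma expVec_apply_one (p : ℕ × ℕ) : expVec p 1 = p.2 := by
  simp [expVec]

lemma expVec_apply_self (d : Fin 2 →₀ ℕ) : expVec (d 0, d 1) = d := by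
  ext j
  fin_cases j <;> simp

lemma expVec_injective : Function.Injective expVec := fun p q hpq =>
  Prod.ext (by simpa using congrArg (· 0) hpq) (by simpa using congrArg (· 1) hpq)

lemma expVec_add_single_one (p : ℕ × ℕ) :
    expVec p + Finsupp.single 1 1 = expVec (p.1, p.2 + 1) := by
  simp [expVec, Finsupp.single_add, add_assoc]

lemma mem_supp_iff {h : MvPolynomial (Fin 2) ℂ} {p : ℕ × ℕ} :
    p ∈ supp h ↔ coeff2 h p ≠ 0 := by
  refine ⟨?_, fun hp => Finset.mem_image.mpr ⟨expVec p, MvPolynomial.mem_support_iff.mpr hp, by simp⟩⟩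
  intro hp
  obtain ⟨d, hd, rfl⟩ := Finset.mem_image.mp hp
  rwa [coeff2_eq_coeff, expVec_apply_self, ← MvPolynomial.mem_support_iff]

lemma ext_coeff2 {f g : MvPolynomial (Fin 2) ℂ} (hfg : ∀ p, coeff2 f p = coeff2 g p) : f = g :=
  MvPolynomial.ext _ _ fun d => by
    simpa only [coeff2_eq_coeff, expVec_apply_self] using hfg (d 0, d 1)

lemma coeff2_pderiv_one (f : MvPolynomial (Fin 2) ℂ) (p : ℕ × ℕ) :
    coeff2 (MvPolynomial.pderiv 1 f) p = coeff2 f (p.1, p.2 + 1) * (p.2 + 1) := by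
  rw [coeff2_eq_coeff, MvPolynomial.coeff_pderiv, expVec_add_single_one, expVec_apply_one]
  rfl

lemma mem_supp_pderiv_one {f : MvPolynomial (Fin 2) ℂ} {p : ℕ × ℕ} :
    p ∈ supp (MvPolynomial.pderiv 1 f) ↔ (p.1, p.2 + 1) ∈ supp f := by
  rw [mem_supp_iff, mem_supp_iff, coeff2_pderiv_one, mul_ne_zero_iff]
  exact and_iff_left (Nat.cast_add_one_ne_zero p.2)

lemma coeff2_inPoly (f : MvPolynomial (Fin 2) ℂ) (S : Seg) (p : ℕ × ℕ) :
    coeff2 (inPoly f S) p = if OnSeg S p then coeff2 f p else 0 := by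
  have hmono : ∀ q, coeff2 (MvPolynomial.monomial (expVec q) (coeff2 f q)) p =
      if q = p then coeff2 f q else 0 := fun q => by
    simp only [coeff2_eq_coeff, MvPolynomial.coeff_monomial, expVec_injective.eq_iff]
  rw [coeff2_eq_coeff, inPoly, MvPolynomial.coeff_sum]
  change ∑ q ∈ _, coeff2 (MvPolynomial.monomial (expVec q) (coeff2 f q)) p = _
  rw [Finset.sum_congr rfl fun q _ => hmono q, Finset.sum_ite_eq']
  by_cases hc : coeff2 f p = 0 <;> simp [hc, mem_supp_iff]

/-- For `S` touching the horizontal axis, truncated subtraction makes this differ from the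
translate `S − (0,1)`. -/
def Seg.shiftDown (S : Seg) : Seg := ⟨(S.P.1, S.P.2 - 1), (S.Q.1, S.Q.2 - 1)⟩

lemma lfun_shiftDown {S : Seg} (hP : 1 ≤ S.P.2) (hQ : 1 ≤ S.Q.2) :
    lfun S.shiftDown = lfun S := by
  funext v
  simp only [lfun, Seg.shiftDown]
  push_cast [hP, hQ]
  ring

lemma lfun_add_snd_one_sub (S : Seg) (v w : ℕ × ℕ) :
    lfun S (v.1, v.2 + 1) - lfun S (w.1, w.2 + 1) = lfun S v - lfun S w := by
  simp only [lfun]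
  push_cast
  ring

lemma lfun_shiftDown_sub {S : Seg} (hP : 1 ≤ S.P.2) (hQ : 1 ≤ S.Q.2) (v : ℕ × ℕ) :
    lfun S.shiftDown v - lfun S.shiftDown S.shiftDown.P = lfun S (v.1, v.2 + 1) - lfun S S.P := by
  have hPup : S.P = (S.shiftDown.P.1, S.shiftDown.P.2 + 1) :=
    Prod.ext rfl (Nat.sub_add_cancel hP).symm
  rw [lfun_shiftDown hP hQ, hPup, lfun_add_snd_one_sub]

lemma onSeg_shiftDown_iff {S : Seg} (hP : 1 ≤ S.P.2) (hQ : 1 ≤ S.Q.2) (v : ℕ × ℕ) :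
    OnSeg S.shiftDown v ↔ OnSeg S (v.1, v.2 + 1) := by
  have hline := lfun_shiftDown_sub hP hQ v
  simp only [OnSeg, ← sub_eq_zero (a := lfun _ v), ← sub_eq_zero (a := lfun _ (_, _)), hline]
  simp only [Seg.shiftDown]
  omega

theorem RightSeg.shiftDown {f g : MvPolynomial (Fin 2) ℂ} {S : Seg}
    (hsupp : ∀ v, v ∈ supp g ↔ (v.1, v.2 + 1) ∈ supp f) (hS : RightSeg f S) (hP : 1 ≤ S.P.2) :
    RightSeg g S.shiftDown := by
  obtain ⟨hPf, hQf, hPQ, hleft, hface⟩ := hS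
  have hQ : 1 ≤ S.Q.2 := hP.trans hPQ.le
  have hline := lfun_shiftDown_sub hP hQ
  refine ⟨(hsupp _).mpr ?_, (hsupp _).mpr ?_, ?_, fun v hv => ?_, fun v hv hv' => ?_⟩
  · simpa only [Seg.shiftDown, Nat.sub_add_cancel hP] using hPf
  · simpa only [Seg.shiftDown, Nat.sub_add_cancel hQ] using hQf
  · simp only [Seg.shiftDown]; omega
  · linarith [hline v, hleft _ ((hsupp v).mp hv)]
  · have := hface _ ((hsupp v).mp hv) (by linarith [hline v])
    simp only [Seg.shiftDown]; omega

theorem inPoly_pderiv_one_shiftDown (f : MvPolynomial (Fin 2) ℂ) {S : Seg}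
    (hP : 1 ≤ S.P.2) (hQ : 1 ≤ S.Q.2) :
    inPoly (MvPolynomial.pderiv 1 f) S.shiftDown = MvPolynomial.pderiv 1 (inPoly f S) :=
  ext_coeff2 fun p => by
    simp only [coeff2_inPoly, coeff2_pderiv_one, onSeg_shiftDown_iff hP hQ, ite_mul, zero_mul]

theorem stmt16_general (h : MvPolynomial (Fin 2) ℂ)
    (S : Seg) (hS : RightSeg h S) (hax : 1 ≤ S.P.2) :
    RightSeg (MvPolynomial.pderiv (1 : Fin 2) h)
        ⟨(S.P.1, S.P.2 - 1), (S.Q.1, S.Q.2 - 1)⟩ ∧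
    inPoly (MvPolynomial.pderiv (1 : Fin 2) h) ⟨(S.P.1, S.P.2 - 1), (S.Q.1, S.Q.2 - 1)⟩
      = MvPolynomial.pderiv (1 : Fin 2) (inPoly h S) := by
  have hQ : 1 ≤ S.Q.2 := hax.trans hS.2.2.1.le
  exact ⟨hS.shiftDown (fun _ => mem_supp_pderiv_one) hax, inPoly_pderiv_one_shiftDown h hax hQ⟩

/-- Standard segments of the right polygon of `∂h/∂Y` (Section 8): if `S` is a segment
of the right Newton polygon of `h` that does not touch the horizontal axis
(every point of `S` has ordinate ≥ 1), then `T = S − (0,1)` is a segment of the right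
Newton polygon of `∂h/∂Y` and `in(∂h/∂Y, T) = ∂/∂Y in(h,S)` (equation (19)). -/
theorem stmt16 (h : MvPolynomial (Fin 2) ℂ)
    (hdy : MvPolynomial.pderiv (1 : Fin 2) h ≠ 0)
    (S : Seg) (hS : RightSeg h S) (hax : 1 ≤ S.P.2) :
    RightSeg (MvPolynomial.pderiv (1 : Fin 2) h)
        ⟨(S.P.1, S.P.2 - 1), (S.Q.1, S.Q.2 - 1)⟩ ∧
    inPoly (MvPolynomial.pderiv (1 : Fin 2) h) ⟨(S.P.1, S.P.2 - 1), (S.Q.1, S.Q.2 - 1)⟩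
      = MvPolynomial.pderiv (1 : Fin 2) (inPoly h S) :=
  stmt16_general h S hS hax
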